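/- Let s > 1 and 𝒞 a good dyadic cover of an s-set K ⊂ [0,1)² with Σ_{Q ∈ 𝒞} |Q|ˢ ≤ C. Define f_θ = Σ_{Q ∈ 𝒞} χ_{proj_θ(Q)}·|Q|^{s−1} on L_θ. Then ∫_{−π/2}^{π/2} (∫_{L_θ} f_θ² dm) dθ ≤ C'', where C'' depends only on C and s (not on the diameter of 𝒞). -/

import Mathlib

/-!
Expanding the square, `∫ f_θ²` is a sum over pairs of squares `Q, Q̃` of
`|Q|^(s-1) |Q̃|^(s-1) m(proj_θ Q ∩ proj_θ Q̃)`; the measure is at most `2 min(|Q|, |Q̃|)` and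
vanishes unless `θ` lies in a set of directions of measure `≲ (|Q| + |Q̃|) / |x_Q - x_Q̃|`.
Let `k` be the finest level at which the dyadic ancestors of `Q` and `Q̃` are adjacent; unless `k`
is the level of the larger square, the non-adjacent ancestors one level finer force
`|x_Q - x_Q̃| ≥ 2^(-k-1)`, so in all cases the pair contributes `≲ 2^k |Q|^s |Q̃|^s`.
For fixed `Q`, the squares at scale `k` lie in the nine level-`k` squares around the ancestor of
`Q`, so the good-cover condition bounds their `s`-mass by `9 C 2^(-ks)`; as `s > 1` the sum of
`2^(k(1-s))` over `k > 0` converges, and the scales `k ≤ 0` are paid for by the total mass `C`.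
-/

open MeasureTheory Set Metric ENNReal Real

noncomputable section

/-- The plane with the Euclidean metric. -/
abbrev E := EuclideanSpace ℝ (Fin 2)

/-- The half-open dyadic square `[a·2⁻ⁱ, (a+1)·2⁻ⁱ) × [b·2⁻ⁱ, (b+1)·2⁻ⁱ)`. -/
def dyadicSq (i a b : ℤ) : Set E :=
  {p | p 0 ∈ Set.Ico ((a : ℝ) * 2 ^ (-i)) ((a + 1 : ℝ) * 2 ^ (-i)) ∧
       p 1 ∈ Set.Ico ((b : ℝ) * 2 ^ (-i)) ((b + 1 : ℝ) * 2 ^ (-i))}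

/-- A dyadic square is an element of some family `𝒟ᵢ`. -/
def IsDyadicSquare (S : Set E) : Prop := ∃ i a b : ℤ, S = dyadicSq i a b
/-- The orthogonal projection onto the line `L_θ = ℝ·(cos θ, sin θ)`, identified with ℝ
via the isometry `t·v_θ ↦ t`. -/
def proj (θ : ℝ) (p : E) : ℝ := p 0 * Real.cos θ + p 1 * Real.sin θ
/-- The dyadic square associated to a parameter triple. -/
def dsq (q : ℤ × ℤ × ℤ) : Set E := dyadicSq q.1 q.2.1 q.2.2

/-- The unit square `[0,1)²`. -/
def unitSq : Set E := {p | p 0 ∈ Set.Ico (0 : ℝ) 1 ∧ p 1 ∈ Set.Ico (0 : ℝ) 1}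

open Filter Topology

lemma dist_eq_sqrt (p q : E) : dist p q = √((p 0 - q 0) ^ 2 + (p 1 - q 1) ^ 2) := by
  simp [EuclideanSpace.dist_eq, Fin.sum_univ_two, Real.dist_eq, sq_abs]

section DyadicGeometry

variable (i a b : ℤ)

lemma dist_le_of_mem_dyadicSq {p p' : E} (hp : p ∈ dyadicSq i a b) (hp' : p' ∈ dyadicSq i a b) :
    dist p p' ≤ √2 * 2 ^ (-i) := by
  obtain ⟨⟨hp₀, hp₀'⟩, hp₁, hp₁'⟩ := hp
  obtain ⟨⟨hq₀, hq₀'⟩, hq₁, hq₁'⟩ := hp'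
  have h₀ : (p 0 - p' 0) ^ 2 ≤ (2 ^ (-i)) ^ 2 := sq_le_sq' (by linarith) (by linarith)
  have h₁ : (p 1 - p' 1) ^ 2 ≤ (2 ^ (-i)) ^ 2 := sq_le_sq' (by linarith) (by linarith)
  rw [dist_eq_sqrt, ← Real.sqrt_sq (by positivity : (0 : ℝ) ≤ 2 ^ (-i)),
    ← Real.sqrt_mul zero_le_two]
  gcongr
  linarith

lemma isBounded_dyadicSq : Bornology.IsBounded (dyadicSq i a b) :=
  Metric.isBounded_iff.2 ⟨_, fun _ hp _ hp' => dist_le_of_mem_dyadicSq i a b hp hp'⟩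

lemma diam_dyadicSq : diam (dyadicSq i a b) = √2 * 2 ^ (-i) := by
  refine le_antisymm (diam_le_of_forall_dist_le (by positivity)
    fun _ hp _ hp' => dist_le_of_mem_dyadicSq i a b hp hp') ?_
  set point : ℝ → E := fun t => !₂[(a + t) * 2 ^ (-i), (b + t) * 2 ^ (-i)]
  have mem : ∀ t ∈ Ico (0 : ℝ) 1, point t ∈ dyadicSq i a b := fun t ⟨h0, h1⟩ => by
    have : (0 : ℝ) < 2 ^ (-i) := by positivity
    refine ⟨⟨?_, ?_⟩, ?_, ?_⟩ <;>
      simp only [point, Matrix.cons_val_zero, Matrix.cons_val_one, Matrix.cons_val_fin_one] <;>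
      nlinarith
  have dist_point : ∀ t ∈ Ico (0 : ℝ) 1, dist (point t) (point 0) = √2 * t * 2 ^ (-i) := by
    intro t ht
    have : (0 : ℝ) < 2 ^ (-i) := by positivity
    simp only [dist_eq_sqrt, point, Matrix.cons_val_zero, Matrix.cons_val_one,
      Matrix.cons_val_fin_one]
    rw [show (a + t) * 2 ^ (-i) - (a + 0) * 2 ^ (-i) = t * 2 ^ (-i) by ring,
      show (b + t) * 2 ^ (-i) - (b + 0) * 2 ^ (-i) = t * 2 ^ (-i) by ring, ← two_mul,
      Real.sqrt_mul zero_le_two, Real.sqrt_sq (mul_nonneg ht.1 this.le), mul_assoc]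
  refine le_of_tendsto (f := fun t => √2 * t * 2 ^ (-i)) (x := 𝓝[<] 1) ?_ ?_
  · have : Continuous fun t : ℝ => √2 * t * 2 ^ (-i) := by fun_prop
    simpa using (this.tendsto 1).mono_left nhdsWithin_le_nhds
  · filter_upwards [Ico_mem_nhdsLT (zero_lt_one' ℝ)] with t ht
    rw [← dist_point t ht]
    exact dist_le_diam_of_mem (isBounded_dyadicSq i a b) (mem t ht) (mem 0 ⟨le_rfl, one_pos⟩)

lemma convex_dyadicSq : Convex ℝ (dyadicSq i a b) :=
  have coordinate : ∀ j : Fin 2, IsLinearMap ℝ fun p : E => p j :=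
    fun _ => ⟨fun _ _ => rfl, fun _ _ => rfl⟩
  ((convex_Ico _ _).is_linear_preimage (coordinate 0)).inter
    ((convex_Ico _ _).is_linear_preimage (coordinate 1))

end DyadicGeometry

lemma diam_dsq_pos (q : ℤ × ℤ × ℤ) : 0 < diam (dsq q) := by
  rw [dsq, diam_dyadicSq]
  positivity

lemma mem_Ico_ediv_mul {c N : ℤ} {t u : ℝ} (hN : 0 < N) (ht : 0 < t)
    (hu : u ∈ Ico (c * t) ((c + 1) * t)) :
    u ∈ Ico (((c / N : ℤ) : ℝ) * (N * t)) (((c / N : ℤ) + 1 : ℝ) * (N * t)) := by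
  have lower : ((c / N : ℤ) : ℝ) * N ≤ c := by exact_mod_cast Int.ediv_mul_le c hN.ne'
  have upper : (c + 1 : ℝ) ≤ ((c / N : ℤ) + 1) * N := by
    exact_mod_cast Int.lt_ediv_add_one_mul_self c hN
  constructor <;> nlinarith [hu.1, hu.2]

lemma le_abs_sub_of_mem_Ico {c c' : ℤ} {t u v : ℝ} (ht : 0 < t) (hc : 2 ≤ |c - c'|)
    (hu : u ∈ Ico (c * t) ((c + 1) * t)) (hv : v ∈ Ico (c' * t) ((c' + 1) * t)) :
    t ≤ |u - v| := by
  rcases le_abs'.1 hc with h | h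
  · have : (c : ℝ) + 2 ≤ c' := by exact_mod_cast (by linarith : c + 2 ≤ c')
    exact le_abs'.2 (Or.inl (by nlinarith [hu.2, hv.1]))
  · have : (c' : ℝ) + 2 ≤ c := by exact_mod_cast (by linarith : c' + 2 ≤ c)
    exact le_abs'.2 (Or.inr (by nlinarith [hu.1, hv.2]))

def corner (q : ℤ × ℤ × ℤ) : E := !₂[q.2.1 * 2 ^ (-q.1), q.2.2 * 2 ^ (-q.1)]

lemma corner_mem_dsq (q : ℤ × ℤ × ℤ) : corner q ∈ dsq q := by
  have : (0 : ℝ) < 2 ^ (-q.1) := by positivity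
  refine ⟨⟨?_, ?_⟩, ?_, ?_⟩ <;>
    simp only [corner, Matrix.cons_val_zero, Matrix.cons_val_one, Matrix.cons_val_fin_one] <;>
    linarith

/-- Indices of the level-`k` dyadic ancestor of `dsq q`; junk for `k > q.1`, where the exponent
truncates to `0`. -/
def ancestor (k : ℤ) (q : ℤ × ℤ × ℤ) : ℤ × ℤ :=
  (q.2.1 / 2 ^ (q.1 - k).toNat, q.2.2 / 2 ^ (q.1 - k).toNat)

lemma dsq_subset_ancestor {k : ℤ} {q : ℤ × ℤ × ℤ} (hk : k ≤ q.1) :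
    dsq q ⊆ dyadicSq k (ancestor k q).1 (ancestor k q).2 := by
  have hN : (0 : ℤ) < 2 ^ (q.1 - k).toNat := by positivity
  have scale_eq : (((2 : ℤ) ^ (q.1 - k).toNat : ℤ) : ℝ) * 2 ^ (-q.1) = 2 ^ (-k) := by
    rw [Int.cast_pow, Int.cast_ofNat, ← zpow_natCast, ← zpow_add₀ two_ne_zero]
    congr 1
    omega
  rintro p ⟨h0, h1⟩
  have ht : (0 : ℝ) < 2 ^ (-q.1) := by positivity
  exact ⟨scale_eq ▸ mem_Ico_ediv_mul hN ht h0, scale_eq ▸ mem_Ico_ediv_mul hN ht h1⟩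

/-- `u` and `v` index dyadic squares of one level whose closures meet. -/
def Adjacent (u v : ℤ × ℤ) : Prop := |u.1 - v.1| ≤ 1 ∧ |u.2 - v.2| ≤ 1

lemma le_dist_of_not_adjacent {k : ℤ} {u v : ℤ × ℤ} {p p' : E} (h : ¬Adjacent u v)
    (hp : p ∈ dyadicSq k u.1 u.2) (hp' : p' ∈ dyadicSq k v.1 v.2) : 2 ^ (-k) ≤ dist p p' := by
  have ht : (0 : ℝ) < 2 ^ (-k) := by positivity
  rw [Adjacent, not_and_or, not_le, not_le] at h
  rcases h with h | h
  · exact (le_abs_sub_of_mem_Ico ht h hp.1 hp'.1).trans (PiLp.dist_apply_le p p' 0)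
  · exact (le_abs_sub_of_mem_Ico ht h hp.2 hp'.2).trans (PiLp.dist_apply_le p p' 1)

/-- `2 ^ (-scale q q')` is the dyadic distance scale of the pair `dsq q`, `dsq q'`. -/
def scale (q q' : ℤ × ℤ × ℤ) : ℤ :=
  sSup {k | k ≤ min q.1 q'.1 ∧ Adjacent (ancestor k q) (ancestor k q')}

section Scale

variable (q q' : ℤ × ℤ × ℤ)

lemma exists_adjacent_ancestor :
    ∃ k, k ≤ min q.1 q'.1 ∧ Adjacent (ancestor k q) (ancestor k q') := by
  by_contra! h
  obtain ⟨n, hn⟩ := pow_unbounded_of_one_lt (dist (corner q) (corner q')) one_lt_two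
  set k := min (min q.1 q'.1) (-n)
  have far := le_dist_of_not_adjacent (h k (min_le_left _ _))
    (dsq_subset_ancestor ((min_le_left _ _).trans (min_le_left _ _)) (corner_mem_dsq q))
    (dsq_subset_ancestor ((min_le_left _ _).trans (min_le_right _ _)) (corner_mem_dsq q'))
  have : (2 : ℝ) ^ n ≤ 2 ^ (-k) := by
    rw [← zpow_natCast]
    exact zpow_le_zpow_right₀ one_le_two (by omega)
  linarith

lemma scale_spec :
    scale q q' ≤ min q.1 q'.1 ∧ Adjacent (ancestor (scale q q') q) (ancestor (scale q q') q') :=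
  Int.csSup_mem (exists_adjacent_ancestor q q') ⟨min q.1 q'.1, fun _ hk => hk.1⟩

lemma zpow_neg_scale_le_dist (h : scale q q' < min q.1 q'.1) {p p' : E} (hp : p ∈ dsq q)
    (hp' : p' ∈ dsq q') : 2 ^ (-(scale q q' + 1)) ≤ dist p p' := by
  have hk : scale q q' + 1 ≤ min q.1 q'.1 := h
  refine le_dist_of_not_adjacent (fun hadj => ?_)
    (dsq_subset_ancestor (hk.trans (min_le_left _ _)) hp)
    (dsq_subset_ancestor (hk.trans (min_le_right _ _)) hp')
  have : scale q q' + 1 ≤ scale q q' :=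
    le_csSup ⟨min q.1 q'.1, fun _ hk => hk.1⟩ ⟨hk, hadj⟩
  omega

end Scale

lemma sum_zpow_le_of_nonneg {r : ℝ} (h0 : 0 ≤ r) (h1 : r < 1) {S : Finset ℤ}
    (hS : ∀ k ∈ S, 0 ≤ k) : ∑ k ∈ S, r ^ k ≤ (1 - r)⁻¹ := by
  have toNat_injOn : Set.InjOn Int.toNat S := fun k hk l hl h => by
    have := hS k hk; have := hS l hl; omega
  calc ∑ k ∈ S, r ^ k = ∑ n ∈ S.image Int.toNat, r ^ n := by
        rw [Finset.sum_image toNat_injOn]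
        exact Finset.sum_congr rfl fun k hk => by
          rw [← zpow_natCast, Int.toNat_of_nonneg (hS k hk)]
    _ ≤ ∑' n, r ^ n :=
        (summable_geometric_of_lt_one h0 h1).sum_le_tsum _ fun _ _ => pow_nonneg h0 _
    _ = (1 - r)⁻¹ := tsum_geometric_of_lt_one h0 h1

lemma two_zpow_mul_rpow (k : ℤ) (s : ℝ) :
    (2 : ℝ) ^ k * (√2 * 2 ^ (-k)) ^ s = √2 ^ s * ((2 : ℝ) ^ (1 - s)) ^ k := by
  rw [Real.mul_rpow (Real.sqrt_nonneg 2) (by positivity), ← Real.rpow_intCast,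
    ← Real.rpow_intCast, ← Real.rpow_intCast, ← Real.rpow_mul zero_le_two,
    ← Real.rpow_mul zero_le_two, mul_left_comm, ← Real.rpow_add two_pos]
  congr 2
  push_cast
  ring

open scoped Classical in
def IsGoodCover (s C : ℝ) (𝒞 : Finset (ℤ × ℤ × ℤ)) : Prop :=
  ∀ i a b : ℤ,
    (∑ q ∈ 𝒞.filter (fun q => dsq q ⊆ dyadicSq i a b), diam (dsq q) ^ s) ≤
      C * diam (dyadicSq i a b) ^ s

namespace IsGoodCover

variable {s C : ℝ} {𝒞 : Finset (ℤ × ℤ × ℤ)}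

lemma sum_le_of_adjacent (h𝒞 : IsGoodCover s C 𝒞) {k : ℤ} (u : ℤ × ℤ)
    {F : Finset (ℤ × ℤ × ℤ)} (hF𝒞 : F ⊆ 𝒞)
    (hF : ∀ q ∈ F, k ≤ q.1 ∧ Adjacent u (ancestor k q)) :
    ∑ q ∈ F, diam (dsq q) ^ s ≤ 9 * (C * (√2 * 2 ^ (-k)) ^ s) := by
  classical
  set nbhd := Finset.Icc (u.1 - 1) (u.1 + 1) ×ˢ Finset.Icc (u.2 - 1) (u.2 + 1)
  have maps_to : ∀ q ∈ F, ancestor k q ∈ nbhd := fun q hq => by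
    obtain ⟨_, h1, h2⟩ := hF q hq
    rw [abs_le] at h1 h2
    simp only [nbhd, Finset.mem_product, Finset.mem_Icc]
    omega
  have fiber_le : ∀ v ∈ nbhd, ∑ q ∈ F with ancestor k q = v, diam (dsq q) ^ s ≤
      C * (√2 * 2 ^ (-k)) ^ s := fun v _ => by
    rw [← diam_dyadicSq k v.1 v.2]
    refine le_trans (Finset.sum_le_sum_of_subset_of_nonneg ?_
      fun _ _ _ => Real.rpow_nonneg diam_nonneg s) (h𝒞 k v.1 v.2)
    intro q hq
    rw [Finset.mem_filter] at hq ⊢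
    exact ⟨hF𝒞 hq.1, hq.2 ▸ dsq_subset_ancestor (hF q hq.1).1⟩
  calc ∑ q ∈ F, diam (dsq q) ^ s
      = ∑ v ∈ nbhd, ∑ q ∈ F with ancestor k q = v, diam (dsq q) ^ s :=
        (Finset.sum_fiberwise_of_maps_to maps_to _).symm
    _ ≤ ∑ v ∈ nbhd, C * (√2 * 2 ^ (-k)) ^ s := Finset.sum_le_sum fiber_le
    _ = 9 * (C * (√2 * 2 ^ (-k)) ^ s) := by
        rw [Finset.sum_const, nsmul_eq_mul, Finset.card_product, Int.card_Icc, Int.card_Icc,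
          show u.1 + 1 + 1 - (u.1 - 1) = 3 by ring, show u.2 + 1 + 1 - (u.2 - 1) = 3 by ring]
        norm_num [show Int.toNat 3 = 3 from rfl]

lemma sum_scale_eq_le (h𝒞 : IsGoodCover s C 𝒞) (q : ℤ × ℤ × ℤ) (k : ℤ) :
    ∑ q' ∈ 𝒞 with scale q q' = k, diam (dsq q') ^ s ≤ 9 * (C * (√2 * 2 ^ (-k)) ^ s) := by
  refine h𝒞.sum_le_of_adjacent (ancestor k q) (Finset.filter_subset _ _) fun q' hq' => ?_
  obtain ⟨hle, hadj⟩ := scale_spec q q'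
  rw [(Finset.mem_filter.1 hq').2] at hle hadj
  exact ⟨hle.trans (min_le_right _ _), hadj⟩

lemma sum_mul_zpow_scale_pos_le (hs : 1 < s) (hC : 0 ≤ C) (h𝒞 : IsGoodCover s C 𝒞)
    (q : ℤ × ℤ × ℤ) :
    ∑ q' ∈ 𝒞 with 0 < scale q q', diam (dsq q') ^ s * 2 ^ scale q q' ≤
      9 * C * √2 ^ s * (1 - 2 ^ (1 - s))⁻¹ := by
  classical
  set fine := 𝒞.filter (0 < scale q ·)
  have fiber_le : ∀ k ∈ fine.image (scale q),
      ∑ q' ∈ fine with scale q q' = k, diam (dsq q') ^ s * 2 ^ scale q q' ≤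
        9 * C * √2 ^ s * ((2 : ℝ) ^ (1 - s)) ^ k := fun k _ => by
    calc _ = 2 ^ k * ∑ q' ∈ fine with scale q q' = k, diam (dsq q') ^ s := by
          rw [Finset.mul_sum]
          exact Finset.sum_congr rfl fun q' hq' => by rw [(Finset.mem_filter.1 hq').2, mul_comm]
      _ ≤ 2 ^ k * ∑ q' ∈ 𝒞 with scale q q' = k, diam (dsq q') ^ s := by
          gcongr 2 ^ k * ?_
          exact Finset.sum_le_sum_of_subset_of_nonneg
            (Finset.filter_subset_filter _ (Finset.filter_subset _ _))
            fun _ _ _ => Real.rpow_nonneg diam_nonneg s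
      _ ≤ 2 ^ k * (9 * (C * (√2 * 2 ^ (-k)) ^ s)) := by grw [h𝒞.sum_scale_eq_le q k]
      _ = 9 * C * √2 ^ s * ((2 : ℝ) ^ (1 - s)) ^ k := by
          linear_combination 9 * C * two_zpow_mul_rpow k s
  calc _ = ∑ k ∈ fine.image (scale q), ∑ q' ∈ fine with scale q q' = k,
        diam (dsq q') ^ s * 2 ^ scale q q' :=
        (Finset.sum_fiberwise_of_maps_to (fun _ => Finset.mem_image_of_mem _) _).symm
    _ ≤ ∑ k ∈ fine.image (scale q), 9 * C * √2 ^ s * ((2 : ℝ) ^ (1 - s)) ^ k :=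
        Finset.sum_le_sum fiber_le
    _ ≤ 9 * C * √2 ^ s * (1 - 2 ^ (1 - s))⁻¹ := by
        rw [← Finset.mul_sum]
        gcongr
        refine sum_zpow_le_of_nonneg (by positivity)
          (Real.rpow_lt_one_of_one_lt_of_neg one_lt_two (by linarith)) fun k hk => ?_
        obtain ⟨q', hq', rfl⟩ := Finset.mem_image.1 hk
        exact (Finset.mem_filter.1 hq').2.le

lemma sum_mul_zpow_scale_le (hs : 1 < s) (h𝒞 : IsGoodCover s C 𝒞)
    (htot : ∑ q ∈ 𝒞, diam (dsq q) ^ s ≤ C) (q : ℤ × ℤ × ℤ) :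
    ∑ q' ∈ 𝒞, diam (dsq q') ^ s * 2 ^ scale q q' ≤
      C * (1 + 9 * √2 ^ s * (1 - 2 ^ (1 - s))⁻¹) := by
  have diam_rpow_nonneg : ∀ q' : ℤ × ℤ × ℤ, 0 ≤ diam (dsq q') ^ s :=
    fun _ => Real.rpow_nonneg diam_nonneg s
  have hC : 0 ≤ C := (Finset.sum_nonneg fun q' _ => diam_rpow_nonneg q').trans htot
  have coarse : ∑ q' ∈ 𝒞 with ¬0 < scale q q', diam (dsq q') ^ s * 2 ^ scale q q' ≤ C :=
    calc _ ≤ ∑ q' ∈ 𝒞 with ¬0 < scale q q', diam (dsq q') ^ s :=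
          Finset.sum_le_sum fun q' hq' => mul_le_of_le_one_right (diam_rpow_nonneg q')
            (zpow_le_one_of_nonpos₀ one_le_two (not_lt.1 (Finset.mem_filter.1 hq').2))
      _ ≤ C := (Finset.sum_le_sum_of_subset_of_nonneg (Finset.filter_subset _ _)
          fun q' _ _ => diam_rpow_nonneg q').trans htot
  rw [← Finset.sum_filter_add_sum_filter_not 𝒞 (0 < scale q ·)]
  linarith [h𝒞.sum_mul_zpow_scale_pos_le hs hC q]

end IsGoodCover

lemma exists_abs_sub_le_of_abs_cos_le {t r : ℝ} (h : |cos t| ≤ r) :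
    ∃ k : ℤ, |t - π / 2 - k * π| ≤ π / 2 ∧ |t - π / 2 - k * π| ≤ π / 2 * r := by
  set k := round ((t - π / 2) / π)
  set y := t - π / 2 - k * π
  have hy : |y| ≤ π / 2 := by
    have := mul_le_mul_of_nonneg_left (abs_sub_round ((t - π / 2) / π)) pi_pos.le
    rw [show y = π * ((t - π / 2) / π - k) by field_simp; ring, abs_mul, abs_of_pos pi_pos]
    linarith
  have hcos : |cos t| = |sin y| := by
    rw [show t = y + k * π + π / 2 by ring, cos_add_pi_div_two, abs_neg, sin_add_int_mul_pi,
      abs_mul, abs_neg_one_zpow, one_mul]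
  refine ⟨k, hy, ?_⟩
  calc |y| = π / 2 * (2 / π * |y|) := by field_simp
    _ ≤ π / 2 * r := by gcongr; exact (mul_abs_le_abs_sin hy).trans (hcos ▸ h)

lemma volume_abs_cos_sub_le {φ : ℝ} (hφ : φ ∈ Ioc (-π) π) (r : ℝ) :
    volume ({θ | |cos (θ - φ)| ≤ r} ∩ Icc (-(π / 2)) (π / 2)) ≤
      ENNReal.ofReal (4 * π * r) := by
  set I : ℤ → Set ℝ := fun k =>
    Icc (φ + π / 2 + k * π - π / 2 * r) (φ + π / 2 + k * π + π / 2 * r)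
  have cover : {θ | |cos (θ - φ)| ≤ r} ∩ Icc (-(π / 2)) (π / 2) ⊆
      ⋃ k ∈ Finset.Icc (-2 : ℤ) 1, I k := by
    rintro θ ⟨hθr, hθ₁, hθ₂⟩
    obtain ⟨k, hy, hyr⟩ := exists_abs_sub_le_of_abs_cos_le hθr
    obtain ⟨hy₁, hy₂⟩ := abs_le.1 hy
    obtain ⟨hyr₁, hyr₂⟩ := abs_le.1 hyr
    have lower : (-3 : ℤ) < k := by
      exact_mod_cast lt_of_mul_lt_mul_right
        (by linarith [hφ.2, pi_pos] : (-3 : ℝ) * π < k * π) pi_pos.le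
    have upper : k < (2 : ℤ) := by
      exact_mod_cast lt_of_mul_lt_mul_right
        (by linarith [hφ.1, pi_pos] : (k : ℝ) * π < 2 * π) pi_pos.le
    exact mem_iUnion₂.2
      ⟨k, Finset.mem_Icc.2 ⟨by omega, by omega⟩, by linarith, by linarith⟩
  calc _ ≤ volume (⋃ k ∈ Finset.Icc (-2 : ℤ) 1, I k) := measure_mono cover
    _ ≤ ∑ k ∈ Finset.Icc (-2 : ℤ) 1, volume (I k) := measure_biUnion_finset_le _ _
    _ = ∑ _k ∈ Finset.Icc (-2 : ℤ) 1, ENNReal.ofReal (π * r) :=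
        Finset.sum_congr rfl fun k _ => by rw [Real.volume_Icc]; ring_nf
    _ = ENNReal.ofReal (4 * π * r) := by
        rw [Finset.sum_const, Int.card_Icc, mul_assoc, ENNReal.ofReal_mul zero_le_four]
        norm_num [show Int.toNat 4 = 4 from rfl]

section Projection

variable (θ : ℝ)

lemma proj_eq_norm_mul_cos (w : E) :
    proj θ w = ‖w‖ * cos (θ - Complex.arg ⟨w 0, w 1⟩) := by
  have hnorm : ‖w‖ = ‖(⟨w 0, w 1⟩ : ℂ)‖ := by
    rw [EuclideanSpace.norm_eq, Complex.norm_def, Complex.normSq_mk, Fin.sum_univ_two]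
    simp only [Real.norm_eq_abs, sq, abs_mul_abs_self]
  have hcos : ‖(⟨w 0, w 1⟩ : ℂ)‖ * cos (Complex.arg ⟨w 0, w 1⟩) = w 0 :=
    Complex.norm_mul_cos_arg _
  have hsin : ‖(⟨w 0, w 1⟩ : ℂ)‖ * sin (Complex.arg ⟨w 0, w 1⟩) = w 1 :=
    Complex.norm_mul_sin_arg _
  rw [cos_sub, hnorm, proj]
  linear_combination (-cos θ) * hcos - sin θ * hsin

lemma abs_proj_le_norm (w : E) : |proj θ w| ≤ ‖w‖ := by
  rw [proj_eq_norm_mul_cos, abs_mul, abs_norm]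
  exact mul_le_of_le_one_right (norm_nonneg w) (abs_cos_le_one _)

lemma isLinearMap_proj : IsLinearMap ℝ (proj θ) where
  map_add x y := by simp only [proj, PiLp.add_apply]; ring
  map_smul c x := by simp only [proj, PiLp.smul_apply, smul_eq_mul]; ring

lemma volume_abs_proj_le {w : E} (hw : w ≠ 0) (R : ℝ) :
    volume ({θ | |proj θ w| ≤ R} ∩ Icc (-(π / 2)) (π / 2)) ≤
      ENNReal.ofReal (4 * π * R / ‖w‖) := by
  have hw' : 0 < ‖w‖ := norm_pos_iff.2 hw
  have : {θ | |proj θ w| ≤ R} =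
      {θ | |cos (θ - Complex.arg ⟨w 0, w 1⟩)| ≤ R / ‖w‖} := by
    ext θ
    change |proj θ w| ≤ R ↔ |cos (θ - Complex.arg ⟨w 0, w 1⟩)| ≤ R / ‖w‖
    rw [proj_eq_norm_mul_cos, abs_mul, abs_norm, le_div_iff₀ hw', mul_comm]
  rw [this, mul_div_assoc]
  exact volume_abs_cos_sub_le ⟨Complex.neg_pi_lt_arg _, Complex.arg_le_pi _⟩ _

variable {θ} {A B : Set E} {x y : E}

lemma image_proj_subset_Icc (hA : Bornology.IsBounded A) (hx : x ∈ A) :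
    proj θ '' A ⊆ Icc (proj θ x - diam A) (proj θ x + diam A) := by
  rintro _ ⟨p, hp, rfl⟩
  have := (abs_proj_le_norm θ (p - x)).trans (dist_le_diam_of_mem hA hp hx)
  rw [(isLinearMap_proj θ).map_sub] at this
  exact ⟨by linarith [neg_abs_le (proj θ p - proj θ x)],
    by linarith [le_abs_self (proj θ p - proj θ x)]⟩

lemma volume_image_proj_le (hA : Bornology.IsBounded A) (hx : x ∈ A) :
    volume (proj θ '' A) ≤ ENNReal.ofReal (2 * diam A) :=
  (measure_mono (image_proj_subset_Icc hA hx)).trans_eq (by rw [Real.volume_Icc]; ring_nf)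

lemma abs_proj_sub_le_of_inter_nonempty (hA : Bornology.IsBounded A) (hB : Bornology.IsBounded B)
    (hx : x ∈ A) (hy : y ∈ B) (h : (proj θ '' A ∩ proj θ '' B).Nonempty) :
    |proj θ (x - y)| ≤ diam A + diam B := by
  obtain ⟨t, htA, htB⟩ := h
  obtain ⟨hA₁, hA₂⟩ := image_proj_subset_Icc hA hx htA
  obtain ⟨hB₁, hB₂⟩ := image_proj_subset_Icc hB hy htB
  rw [(isLinearMap_proj θ).map_sub, abs_le]
  constructor <;> linarith

end Projection

lemma integral_sq_sum_indicator {α ι : Type*} [MeasurableSpace α] (μ : Measure α)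
    (S : Finset ι) {A : ι → Set α} (hA : ∀ i, MeasurableSet (A i))
    (hAfin : ∀ i, μ (A i) ≠ ⊤) (w : ι → ℝ) :
    ∫ x, (∑ i ∈ S, (A i).indicator (fun _ => w i) x) ^ 2 ∂μ =
      ∑ i ∈ S, ∑ j ∈ S, w i * w j * μ.real (A i ∩ A j) := by
  have integrable :
      ∀ i j, Integrable ((A i ∩ A j).indicator fun _ => w i * w j) μ := fun i j =>
    (integrable_indicator_iff ((hA i).inter (hA j))).2
      (integrableOn_const (measure_inter_lt_top_of_left_ne_top (hAfin i)).ne)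
  simp_rw [sq, Finset.sum_mul_sum, ← inter_indicator_mul]
  rw [integral_finsetSum _ fun i _ => integrable_finsetSum _ fun j _ => integrable i j]
  refine Finset.sum_congr rfl fun i _ => ?_
  rw [integral_finsetSum _ fun j _ => integrable i j]
  refine Finset.sum_congr rfl fun j _ => ?_
  rw [integral_indicator_const _ ((hA i).inter (hA j)), smul_eq_mul, mul_comm]

lemma volume_image_proj_dsq_le (θ : ℝ) (q : ℤ × ℤ × ℤ) :
    volume (proj θ '' dsq q) ≤ ENNReal.ofReal (2 * diam (dsq q)) :=
  volume_image_proj_le (isBounded_dyadicSq _ _ _) (corner_mem_dsq q)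

lemma measurableSet_image_proj_dsq (θ : ℝ) (q : ℤ × ℤ × ℤ) :
    MeasurableSet (proj θ '' dsq q) :=
  ((convex_dyadicSq _ _ _).is_linear_image (isLinearMap_proj θ)).ordConnected.measurableSet

/-- Contains every direction `θ` in which the projections of `dsq q` and `dsq q'` meet. -/
def pairAngles (q q' : ℤ × ℤ × ℤ) : Set ℝ :=
  {θ | |proj θ (corner q - corner q')| ≤ diam (dsq q) + diam (dsq q')}

def pairTerm (s : ℝ) (q q' : ℤ × ℤ × ℤ) (θ : ℝ) : ℝ :=
  diam (dsq q) ^ (s - 1) * diam (dsq q') ^ (s - 1) * (2 * min (diam (dsq q)) (diam (dsq q'))) *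
    (pairAngles q q').indicator 1 θ

section PairTerm

variable (s θ : ℝ) (q q' : ℤ × ℤ × ℤ)

lemma measureReal_inter_image_proj_le :
    volume.real (proj θ '' dsq q ∩ proj θ '' dsq q') ≤
      2 * min (diam (dsq q)) (diam (dsq q')) * (pairAngles q q').indicator 1 θ := by
  by_cases hθ : θ ∈ pairAngles q q'
  · have vol_le : ∀ r, volume.real (proj θ '' dsq r) ≤ 2 * diam (dsq r) := fun r =>
      ENNReal.toReal_le_of_le_ofReal (by positivity) (volume_image_proj_dsq_le θ r)
    have finite : ∀ r, volume (proj θ '' dsq r) ≠ ⊤ := fun r =>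
      ne_top_of_le_ne_top ENNReal.ofReal_ne_top (volume_image_proj_dsq_le θ r)
    rw [indicator_of_mem hθ, Pi.one_apply, mul_one, mul_min_of_nonneg _ _ zero_le_two]
    exact le_min ((measureReal_mono inter_subset_left (finite q)).trans (vol_le q))
      ((measureReal_mono inter_subset_right (finite q')).trans (vol_le q'))
  · have : proj θ '' dsq q ∩ proj θ '' dsq q' = ∅ := not_nonempty_iff_eq_empty.1 fun h =>
      hθ (abs_proj_sub_le_of_inter_nonempty (isBounded_dyadicSq _ _ _) (isBounded_dyadicSq _ _ _)
        (corner_mem_dsq q) (corner_mem_dsq q') h)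
    rw [this, indicator_of_notMem hθ, measureReal_empty, mul_zero]

lemma integral_sq_le_sum_pairTerm (𝒞 : Finset (ℤ × ℤ × ℤ)) :
    ∫ x, (∑ q ∈ 𝒞, (proj θ '' dsq q).indicator (fun _ => diam (dsq q) ^ (s - 1)) x) ^ 2
      ≤ ∑ q ∈ 𝒞, ∑ q' ∈ 𝒞, pairTerm s q q' θ := by
  rw [integral_sq_sum_indicator _ _ (measurableSet_image_proj_dsq θ)
    fun r => ne_top_of_le_ne_top ENNReal.ofReal_ne_top (volume_image_proj_dsq_le θ r)]
  gcongr with q _ q' _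
  exact (mul_le_mul_of_nonneg_left (measureReal_inter_image_proj_le θ q q')
    (mul_nonneg (Real.rpow_nonneg diam_nonneg _) (Real.rpow_nonneg diam_nonneg _))).trans_eq
    (mul_assoc _ _ _).symm

end PairTerm

lemma zpow_neg_min_le_diam_add_diam (q q' : ℤ × ℤ × ℤ) :
    2 ^ (-min q.1 q'.1) ≤ diam (dsq q) + diam (dsq q') := by
  have le_diam : ∀ r : ℤ × ℤ × ℤ, (2 : ℝ) ^ (-r.1) ≤ diam (dsq r) := fun r => by
    rw [dsq, diam_dyadicSq]
    exact le_mul_of_one_le_left (by positivity) Real.one_lt_sqrt_two.le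
  rcases min_choice q.1 q'.1 with h | h <;> rw [h]
  · linarith [le_diam q, diam_dsq_pos q']
  · linarith [le_diam q', diam_dsq_pos q]

lemma volume_pairAngles_le (q q' : ℤ × ℤ × ℤ) :
    volume (pairAngles q q' ∩ Icc (-(π / 2)) (π / 2)) ≤
      ENNReal.ofReal (8 * π * (diam (dsq q) + diam (dsq q')) * 2 ^ scale q q') := by
  set D := diam (dsq q) + diam (dsq q')
  rcases (scale_spec q q').1.lt_or_eq with hlt | heq
  · have hsep := zpow_neg_scale_le_dist q q' hlt (corner_mem_dsq q) (corner_mem_dsq q')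
    have hdist : 0 < dist (corner q) (corner q') :=
      (by positivity : (0 : ℝ) < 2 ^ (-(scale q q' + 1))).trans_le hsep
    have one_le : 1 ≤ dist (corner q) (corner q') * (2 * 2 ^ scale q q') := by
      rwa [zpow_neg, inv_le_iff_one_le_mul₀ (by positivity), zpow_add_one₀ two_ne_zero,
        mul_comm (2 ^ scale q q')] at hsep
    refine (volume_abs_proj_le (sub_ne_zero.2 (dist_pos.1 hdist)) D).trans
      (ENNReal.ofReal_le_ofReal ?_)
    rw [← dist_eq_norm, div_le_iff₀ hdist]
    calc 4 * π * D = 4 * π * D * 1 := (mul_one _).symm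
      _ ≤ 4 * π * D * (dist (corner q) (corner q') * (2 * 2 ^ scale q q')) := by gcongr
      _ = _ := by ring
  · have : 1 ≤ D * 2 ^ scale q q' :=
      calc (1 : ℝ) = 2 ^ (-min q.1 q'.1) * 2 ^ scale q q' := by
            rw [heq, zpow_neg, inv_mul_cancel₀ (by positivity)]
        _ ≤ D * 2 ^ scale q q' := by gcongr; exact zpow_neg_min_le_diam_add_diam q q'
    calc _ ≤ volume (Icc (-(π / 2)) (π / 2)) := measure_mono inter_subset_right
      _ = ENNReal.ofReal π := by rw [Real.volume_Icc]; ring_nf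
      _ ≤ _ := ENNReal.ofReal_le_ofReal (by nlinarith [pi_pos])

lemma isClosed_pairAngles (q q' : ℤ × ℤ × ℤ) : IsClosed (pairAngles q q') :=
  isClosed_le (by simp only [proj]; fun_prop) continuous_const

lemma integrableOn_pairTerm (s : ℝ) (q q' : ℤ × ℤ × ℤ) :
    IntegrableOn (pairTerm s q q') (Icc (-(π / 2)) (π / 2)) :=
  Integrable.const_mul (((integrableOn_const (C := (1 : ℝ)) measure_Icc_lt_top.ne).indicator
    (isClosed_pairAngles q q').measurableSet)) _

lemma rpow_sub_one_mul_min_mul_add_le {x y : ℝ} (hx : 0 < x) (hy : 0 < y) (s : ℝ) :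
    x ^ (s - 1) * y ^ (s - 1) * (min x y * (x + y)) ≤ 2 * (x ^ s * y ^ s) := by
  have hmin : min x y * (x + y) ≤ 2 * (x * y) := by
    rcases min_cases x y with ⟨h, hxy⟩ | ⟨h, hxy⟩ <;> rw [h] <;> nlinarith
  calc _ ≤ x ^ (s - 1) * y ^ (s - 1) * (2 * (x * y)) := by gcongr
    _ = 2 * (x ^ s * y ^ s) := by
      rw [Real.rpow_sub_one hx.ne', Real.rpow_sub_one hy.ne']
      field_simp

lemma setIntegral_pairTerm_le (s : ℝ) (q q' : ℤ × ℤ × ℤ) :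
    ∫ θ in Icc (-(π / 2)) (π / 2), pairTerm s q q' θ ≤
      32 * π * (diam (dsq q) ^ s * (diam (dsq q') ^ s * 2 ^ scale q q')) := by
  set d := diam (dsq q)
  set d' := diam (dsq q')
  have angles : volume.real (pairAngles q q' ∩ Icc (-(π / 2)) (π / 2)) ≤
      8 * π * (d + d') * 2 ^ scale q q' :=
    ENNReal.toReal_le_of_le_ofReal (by positivity) (volume_pairAngles_le q q')
  simp only [pairTerm]
  rw [integral_const_mul, integral_indicator_one (isClosed_pairAngles q q').measurableSet,
    measureReal_restrict_apply (isClosed_pairAngles q q').measurableSet]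
  calc _ ≤ d ^ (s - 1) * d' ^ (s - 1) * (2 * min d d') *
        (8 * π * (d + d') * 2 ^ scale q q') := by
        gcongr
    _ = 16 * π * 2 ^ scale q q' * (d ^ (s - 1) * d' ^ (s - 1) * (min d d' * (d + d'))) := by ring
    _ ≤ 16 * π * 2 ^ scale q q' * (2 * (d ^ s * d' ^ s)) :=
        mul_le_mul_of_nonneg_left
          (rpow_sub_one_mul_min_mul_add_le (diam_dsq_pos q) (diam_dsq_pos q') s) (by positivity)
    _ = _ := by ring

open scoped Classical in
/-- The angular average of the square integral of `f_θ` over a good dyadic cover is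
bounded by a constant depending only on the good-cover constant `C` and on `s`, not on
the diameter of the cover. -/
theorem angular_L2_bound (s C : ℝ) (hs : 1 < s) (hC : 0 < C) :
    ∃ C'' : ℝ, 0 < C'' ∧
      ∀ (K : Set E) (𝒞 : Finset (ℤ × ℤ × ℤ)),
        K ⊆ unitSq → MeasurableSet K → dimH K = ENNReal.ofReal s →
        0 < μH[s] K → μH[s] K < ⊤ →
        (K ⊆ ⋃ q ∈ 𝒞, dsq q) →
        (∀ q ∈ 𝒞, ∀ q' ∈ 𝒞, q ≠ q' → Disjoint (dsq q) (dsq q')) →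
        (∀ i a b : ℤ,
          (∑ q ∈ 𝒞.filter (fun q => dsq q ⊆ dyadicSq i a b), Metric.diam (dsq q) ^ s) ≤
            C * Metric.diam (dyadicSq i a b) ^ s) →
        (∑ q ∈ 𝒞, Metric.diam (dsq q) ^ s) ≤ C →
        (∫ θ in Set.Icc (-(π / 2)) (π / 2),
            (∫ x, (∑ q ∈ 𝒞,
              (proj θ '' dsq q).indicator
                (fun _ => Metric.diam (dsq q) ^ (s - 1)) x) ^ 2 ∂volume) ∂volume) ≤
          C'' := by
  set B := 1 + 9 * √2 ^ s * (1 - 2 ^ (1 - s))⁻¹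
  have hB : 0 < B := by
    have : (2 : ℝ) ^ (1 - s) < 1 := Real.rpow_lt_one_of_one_lt_of_neg one_lt_two (by linarith)
    have : 0 < 1 - (2 : ℝ) ^ (1 - s) := by linarith
    positivity
  refine ⟨32 * π * (C * (C * B)), by positivity, fun K 𝒞 _ _ _ _ _ _ _ hgood htot => ?_⟩
  set I := Icc (-(π / 2)) (π / 2)
  have integrable :
      ∀ q ∈ 𝒞, IntegrableOn (fun θ => ∑ q' ∈ 𝒞, pairTerm s q q' θ) I :=
    fun q _ => integrable_finsetSum _ fun q' _ => integrableOn_pairTerm s q q'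
  calc _ ≤ ∫ θ in I, ∑ q ∈ 𝒞, ∑ q' ∈ 𝒞, pairTerm s q q' θ :=
        integral_mono_of_nonneg (ae_of_all _ fun θ => integral_nonneg fun _ => sq_nonneg _)
          (integrable_finsetSum _ integrable)
          (ae_of_all _ fun θ => integral_sq_le_sum_pairTerm s θ 𝒞)
    _ = ∑ q ∈ 𝒞, ∑ q' ∈ 𝒞, ∫ θ in I, pairTerm s q q' θ := by
        rw [integral_finsetSum _ integrable]
        exact Finset.sum_congr rfl fun q _ =>
          integral_finsetSum _ fun q' _ => integrableOn_pairTerm s q q'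
    _ ≤ ∑ q ∈ 𝒞, ∑ q' ∈ 𝒞,
          32 * π * (diam (dsq q) ^ s * (diam (dsq q') ^ s * 2 ^ scale q q')) := by
        gcongr with q _ q' _
        exact setIntegral_pairTerm_le s q q'
    _ = 32 * π * ∑ q ∈ 𝒞, diam (dsq q) ^ s *
          ∑ q' ∈ 𝒞, diam (dsq q') ^ s * 2 ^ scale q q' := by
        simp_rw [Finset.mul_sum]
    _ ≤ 32 * π * ∑ q ∈ 𝒞, diam (dsq q) ^ s * (C * B) := by
        gcongr with q
        exact IsGoodCover.sum_mul_zpow_scale_le hs hgood htot q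
    _ ≤ 32 * π * (C * (C * B)) := by
        rw [← Finset.sum_mul]
        gcongr
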